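/- The number a_{3,2}(n) of compositions (c_1,...,c_m) of n with 3·c_{2i-1} > 2·c_{2i} for all i with 2i ≤ m equals the number of compositions of n into parts congruent to 1, 2, or 4 modulo 5. -/

import Mathlib

/-- `l` is a composition of `n`: a list of positive integers summing to `n`. -/
def IsComposition (n : ℕ) (l : List ℕ) : Prop := (∀ x ∈ l, 0 < x) ∧ l.sum = n

/-- The scaled Arndt condition: `s * c_{2i-1} > t * c_{2i}` for each pair
(0-indexed: `s * l[2i] > t * l[2i+1]`). -/
def ArndtCond (s t : ℕ) (l : List ℕ) : Prop :=
  ∀ i : ℕ, 2 * i + 1 < l.length → t * l[2 * i + 1]! < s * l[2 * i]!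

/-- `a_{s,t}(n)`: the number of scaled Arndt compositions of `n`. -/
noncomputable def arndtCount (s t n : ℕ) : ℕ :=
  Nat.card {l : List ℕ // IsComposition n l ∧ ArndtCond s t l}

/-- Number of compositions of `n` with all parts in the set `A`. -/
noncomputable def compCount (A : Set ℕ) (n : ℕ) : ℕ :=
  Nat.card {l : List ℕ // IsComposition n l ∧ ∀ x ∈ l, x ∈ A}

/-!
Splitting off the first part, compositions into parts from `A` satisfy
`b(n) = ∑_{i<n} [n - i ∈ A] b(i)`. Splitting off the first pair `(c₁, c₂)`, Arndt compositions
satisfy `a(n) = 1 + ∑_{i<n} g(n - i) a(i)`, where `g(k) = ⌊(3k - 1)/5⌋` counts the pairs with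
`c₁ + c₂ = k` and `2c₂ < 3c₁`. Since `g(1) = 0` and `g(k + 1) - g(k) = [k + 1 ≡ 1, 2, 4 mod 5]`
for `k ≥ 1`, subtracting the recurrence for `a(n - 1)` from the one for `a(n)` turns it into the
recurrence for `b` with `A` the residues `1, 2, 4` mod 5.
-/

open Finset

namespace IsComposition

def lists (n : ℕ) : Finset (List ℕ) :=
  univ.image (Composition.blocks (n := n))

theorem mem_lists {n : ℕ} {l : List ℕ} : l ∈ lists n ↔ IsComposition n l := by
  constructor
  · intro h
    obtain ⟨c, -, rfl⟩ := mem_image.1 h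
    exact ⟨fun _ => c.blocks_pos, c.blocks_sum⟩
  · rintro ⟨hpos, hsum⟩
    exact mem_image.2 ⟨⟨l, hpos _, hsum⟩, mem_univ _, rfl⟩

theorem lists_zero : lists 0 = {[]} := by
  ext l
  rcases l with _ | ⟨a, l⟩
  · simp [mem_lists, IsComposition]
  · simp only [mem_lists, IsComposition, List.mem_cons, List.sum_cons, mem_singleton,
      reduceCtorEq, iff_false, not_and]
    intro hpos
    have := hpos a (.inl rfl)
    omega

theorem lists_eq_biUnion {n : ℕ} (hn : 0 < n) :
    lists n =
      (range n).biUnion fun i => (lists i).map ⟨List.cons (n - i), List.cons_injective⟩ := by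
  ext l
  rcases l with _ | ⟨a, l⟩
  · rw [mem_lists]
    exact iff_of_false (fun h => hn.ne h.2) (by simp)
  · simp only [mem_lists, IsComposition, List.mem_cons, List.sum_cons, mem_biUnion, mem_range,
      mem_map, Function.Embedding.coeFn_mk, List.cons.injEq]
    constructor
    · rintro ⟨hpos, hsum⟩
      have := hpos a (.inl rfl)
      exact ⟨l.sum, by omega, l, ⟨fun x hx => hpos x (.inr hx), rfl⟩, by omega, rfl⟩
    · rintro ⟨i, hi, l, ⟨hpos, rfl⟩, rfl, rfl⟩
      exact ⟨by rintro x (rfl | hx) <;> [omega; exact hpos x hx], by omega⟩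

theorem card_filter_lists_eq_sum {n : ℕ} (hn : 0 < n) (P : List ℕ → Prop) [DecidablePred P] :
    #{l ∈ lists n | P l} = ∑ i ∈ range n, #{l ∈ lists i | P ((n - i) :: l)} := by
  rw [lists_eq_biUnion hn, filter_biUnion, card_biUnion]
  · simp only [filter_map, Function.Embedding.coeFn_mk, Function.comp_apply, card_map]
  · intro i hi j hj hij
    simp only [Function.onFun, disjoint_left, mem_filter, mem_map, Function.Embedding.coeFn_mk]
    rintro _ ⟨⟨l, -, rfl⟩, -⟩ ⟨⟨l', -, h⟩, -⟩
    simp only [List.cons.injEq] at h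
    simp only [coe_range, Set.mem_Iio] at hi hj
    omega

end IsComposition

noncomputable def compositionCount (P : List ℕ → Prop) (n : ℕ) : ℕ :=
  Nat.card {l : List ℕ // IsComposition n l ∧ P l}

theorem compositionCount_eq_card_filter (P : List ℕ → Prop) [DecidablePred P] (n : ℕ) :
    compositionCount P n = #{l ∈ IsComposition.lists n | P l} := by
  rw [compositionCount, ← Nat.card_eq_finsetCard]
  exact Nat.card_congr <| Equiv.subtypeEquivRight fun l => by simp [IsComposition.mem_lists]

theorem compositionCount_zero {P : List ℕ → Prop} (h : P []) : compositionCount P 0 = 1 := by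
  classical
  simp [compositionCount_eq_card_filter, IsComposition.lists_zero, filter_singleton, h]

theorem compositionCount_eq_sum (P : List ℕ → Prop) {n : ℕ} (hn : 0 < n) :
    compositionCount P n = ∑ i ∈ range n, compositionCount (fun l => P ((n - i) :: l)) i := by
  classical
  simp only [compositionCount_eq_card_filter]
  exact IsComposition.card_filter_lists_eq_sum hn P

theorem compositionCount_const_and (p : Prop) [Decidable p] (P : List ℕ → Prop) (n : ℕ) :
    compositionCount (fun l => p ∧ P l) n = if p then compositionCount P n else 0 := by
  by_cases hp : p <;> simp [compositionCount, hp]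

theorem compCount_eq_compositionCount (A : Set ℕ) :
    compCount A = compositionCount fun l => ∀ x ∈ l, x ∈ A := rfl

theorem arndtCount_eq_compositionCount (s t : ℕ) :
    arndtCount s t = compositionCount (ArndtCond s t) := rfl

theorem compCount_zero (A : Set ℕ) : compCount A 0 = 1 :=
  compositionCount_zero (List.forall_mem_nil _)

theorem compCount_eq_sum (A : Set ℕ) [DecidablePred (· ∈ A)] {n : ℕ} (hn : 0 < n) :
    compCount A n = ∑ i ∈ range n, if n - i ∈ A then compCount A i else 0 := by
  simp only [compCount_eq_compositionCount, compositionCount_eq_sum _ hn, List.forall_mem_cons,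
    compositionCount_const_and]

theorem arndtCond_nil (s t : ℕ) : ArndtCond s t [] := fun _ h => by simp at h

theorem arndtCond_singleton (s t a : ℕ) : ArndtCond s t [a] := fun _ h => by simp at h

theorem arndtCond_cons_cons {s t a b : ℕ} {l : List ℕ} :
    ArndtCond s t (a :: b :: l) ↔ t * b < s * a ∧ ArndtCond s t l := by
  unfold ArndtCond
  rw [← Nat.and_forall_add_one]
  simp [Nat.mul_succ, Nat.add_one_le_iff]

theorem arndtCount_zero (s t : ℕ) : arndtCount s t 0 = 1 :=
  compositionCount_zero (arndtCond_nil s t)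

theorem compositionCount_arndtCond_cons (s t a i : ℕ) :
    compositionCount (fun l => ArndtCond s t (a :: l)) i =
      (if i = 0 then 1 else 0) +
        ∑ j ∈ range i, if t * (i - j) < s * a then arndtCount s t j else 0 := by
  classical
  rcases i.eq_zero_or_pos with rfl | hi
  · simp [compositionCount_zero (P := fun l => ArndtCond s t (a :: l)) (arndtCond_singleton s t a)]
  · simp only [compositionCount_eq_sum _ hi, arndtCond_cons_cons, compositionCount_const_and,
      arndtCount_eq_compositionCount, hi.ne', if_false, zero_add]

def arndtPairCount (s t k : ℕ) : ℕ :=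
  #{p ∈ antidiagonal k | 0 < p.1 ∧ 0 < p.2 ∧ t * p.2 < s * p.1}

theorem card_filter_Ioo_eq_arndtPairCount (s t j n : ℕ) :
    #{i ∈ Ioo j n | t * (i - j) < s * (n - i)} = arndtPairCount s t (n - j) := by
  refine card_nbij' (fun i => (n - i, i - j)) (fun p => p.2 + j) ?_ ?_ ?_ ?_
  · intro i hi
    simp only [coe_filter, mem_Ioo, Set.mem_ofPred_eq, HasAntidiagonal.mem_antidiagonal] at hi ⊢
    exact ⟨by omega, by omega, by omega, hi.2⟩
  · rintro ⟨a, b⟩ hp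
    simp only [coe_filter, mem_Ioo, Set.mem_ofPred_eq, HasAntidiagonal.mem_antidiagonal] at hp ⊢
    rw [show n - (b + j) = a by omega, Nat.add_sub_cancel]
    exact ⟨⟨by omega, by omega⟩, hp.2.2.2⟩
  · intro i hi
    simp only [coe_filter, mem_Ioo, Set.mem_ofPred_eq] at hi
    exact Nat.sub_add_cancel hi.1.1.le
  · rintro ⟨a, b⟩ hp
    simp only [coe_filter, Set.mem_ofPred_eq, HasAntidiagonal.mem_antidiagonal] at hp
    simp only [Prod.mk.injEq]
    omega

theorem arndtCount_eq_one_add_sum (s t : ℕ) {n : ℕ} (hn : 0 < n) :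
    arndtCount s t n = 1 + ∑ j ∈ range n, arndtPairCount s t (n - j) * arndtCount s t j := by
  classical
  rw [arndtCount_eq_compositionCount, compositionCount_eq_sum _ hn]
  simp only [compositionCount_arndtCond_cons, sum_add_distrib, sum_ite_eq', mem_range, hn, if_true]
  congr 1
  rw [sum_comm' (t' := range n) (s' := fun j => Ioo j n)]
  · refine sum_congr rfl fun j _ => ?_
    rw [← sum_filter, sum_const, smul_eq_mul, card_filter_Ioo_eq_arndtPairCount,
      arndtCount_eq_compositionCount]
  · intro i j
    simp only [mem_range, mem_Ioo]
    omega

theorem arndtPairCount_three_two (k : ℕ) : arndtPairCount 3 2 k = (3 * k - 1) / 5 := by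
  rw [show (3 * k - 1) / 5 = #(Icc 1 ((3 * k - 1) / 5)) by simp]
  refine card_nbij' Prod.snd (fun b => (k - b, b)) ?_ ?_ ?_ ?_
  · rintro ⟨a, b⟩ hp
    simp only [coe_filter, Set.mem_ofPred_eq, HasAntidiagonal.mem_antidiagonal, coe_Icc,
      Set.mem_Icc] at hp ⊢
    omega
  · intro b hb
    simp only [coe_filter, Set.mem_ofPred_eq, HasAntidiagonal.mem_antidiagonal, coe_Icc,
      Set.mem_Icc] at hb ⊢
    omega
  · rintro ⟨a, b⟩ hp
    simp only [coe_filter, Set.mem_ofPred_eq, HasAntidiagonal.mem_antidiagonal] at hp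
    simp only [Prod.mk.injEq, and_true]
    omega
  · intro b _
    rfl

theorem eq_sum_ite_of_eq_one_add_sum {p : ℕ → Prop} [DecidablePred p] {g f : ℕ → ℕ}
    (hp : p 1) (hg₁ : g 1 = 0) (hg : ∀ k, 1 ≤ k → g (k + 1) = g k + if p (k + 1) then 1 else 0)
    (hf₀ : f 0 = 1) (hf : ∀ n, 0 < n → f n = 1 + ∑ i ∈ range n, g (n - i) * f i)
    {n : ℕ} (hn : 0 < n) : f n = ∑ i ∈ range n, if p (n - i) then f i else 0 := by
  obtain ⟨m, rfl⟩ := Nat.exists_eq_add_one.2 hn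
  rcases m.eq_zero_or_pos with rfl | hm
  · simp [hf 1 one_pos, hg₁, hf₀, hp]
  calc f (m + 1)
      = 1 + ∑ i ∈ range m, g (m + 1 - i) * f i + g 1 * f m := by
        rw [hf _ hn, sum_range_succ, add_assoc, Nat.add_sub_cancel_left]
    _ = 1 + ∑ i ∈ range m, (g (m - i) + if p (m + 1 - i) then 1 else 0) * f i := by
        rw [hg₁, zero_mul, add_zero]
        refine congrArg _ (sum_congr rfl fun i hi => ?_)
        have hi : i < m := mem_range.1 hi
        rw [show m + 1 - i = m - i + 1 by omega, hg _ (by omega)]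
    _ = f m + ∑ i ∈ range m, if p (m + 1 - i) then f i else 0 := by
        simp only [add_mul, sum_add_distrib, ite_mul, one_mul, zero_mul, hf m hm, add_assoc]
    _ = ∑ i ∈ range (m + 1), if p (m + 1 - i) then f i else 0 := by
        rw [sum_range_succ, Nat.add_sub_cancel_left, if_pos hp, add_comm]

theorem arndt_3_2_eq (n : ℕ) :
    arndtCount 3 2 n = compCount {x : ℕ | x % 5 = 1 ∨ x % 5 = 2 ∨ x % 5 = 4} n := by
  set A := {x : ℕ | x % 5 = 1 ∨ x % 5 = 2 ∨ x % 5 = 4}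
  have hpair : ∀ k, 1 ≤ k →
      arndtPairCount 3 2 (k + 1) = arndtPairCount 3 2 k + if k + 1 ∈ A then 1 else 0 := by
    intro k hk
    simp only [arndtPairCount_three_two, A, Set.mem_ofPred_eq]
    split_ifs <;> omega
  induction n using Nat.strong_induction_on with
  | _ n ih =>
    rcases n.eq_zero_or_pos with rfl | hn
    · rw [arndtCount_zero, compCount_zero]
    rw [eq_sum_ite_of_eq_one_add_sum (by simp [A]) (by simp [arndtPairCount_three_two]) hpair
      (arndtCount_zero 3 2) (fun _ => arndtCount_eq_one_add_sum 3 2) hn, compCount_eq_sum A hn]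
    exact sum_congr rfl fun i hi => by rw [ih i (mem_range.1 hi)]
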